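/- arXiv:1209.5662 — 2 statements merged into one kernel-verified Lean document; each statement's English description precedes it below -/
import Mathlib

section
/- For every x' ∈ ℝ² and t ∈ ℝ, the eigenvalues of the matrix ∂ₜA(x',t) are λ₁ = 0, λ₂ = |x'|²t − √(|x'|⁴t² + |x'|²), and λ₃ = |x'|²t + √(|x'|⁴t² + |x'|²). In particular, if x' ≠ 0 then ∂ₜA(x',t) has a strictly negative eigenvalue, so the monotonicity condition ∂ₜA(x',t) ≥ cI fails for every c > 0. -/
/-! The characteristic polynomial is `det(∂ₜA - μI) = -μ (μ² - 2|x'|²t μ - |x'|²)`, whose quadratic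
factor has nonnegative discriminant, so the eigenvalues are exactly `0` and the two real roots
`|x'|²t ∓ √(|x'|⁴t² + |x'|²)`. For `x' ≠ 0` the square root exceeds `| |x'|²t |`, so the smaller
root is negative, and testing `∂ₜA ≥ cI` on an eigenvector for it gives a contradiction. -/

open Matrix

/-- The entrywise `t`-derivative `∂ₜA(x',t)` of the twisted-waveguide metric. -/
def dAmat (x₁ x₂ t : ℝ) : Matrix (Fin 3) (Fin 3) ℝ :=
  !![2 * x₂^2 * t, -(2 * x₁ * x₂ * t), -x₂;
     -(2 * x₁ * x₂ * t), 2 * x₁^2 * t, x₁;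
     -x₂, x₁, 0]

theorem Matrix.exists_mulVec_eq_smul_iff_det_sub_eq_zero {n R : Type*} [Fintype n] [DecidableEq n]
    [CommRing R] [IsDomain R] (M : Matrix n n R) (μ : R) :
    (∃ v ≠ 0, M *ᵥ v = μ • v) ↔ (M - μ • 1).det = 0 := by
  simp only [← exists_mulVec_eq_zero_iff, sub_mulVec, smul_mulVec, one_mulVec, sub_eq_zero]

theorem Matrix.not_forall_le_dotProduct_mulVec_of_mulVec_eq_smul {n : Type*} [Fintype n]
    {M : Matrix n n ℝ} {v : n → ℝ} {μ c : ℝ} (hv : v ≠ 0) (hMv : M *ᵥ v = μ • v) (hμc : μ < c) :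
    ¬ ∀ ζ : n → ℝ, c * (ζ ⬝ᵥ ζ) ≤ ζ ⬝ᵥ M *ᵥ ζ := by
  intro h
  have hvv : 0 < v ⬝ᵥ v :=
    (dotProduct_star_self_nonneg v).lt_of_ne' (dotProduct_self_eq_zero.not.mpr hv)
  have := h v
  rw [hMv, dotProduct_smul, smul_eq_mul] at this
  nlinarith

theorem sq_sub_two_mul_sub_eq_mul (b c μ : ℝ) (hc : 0 ≤ b ^ 2 + c) :
    μ ^ 2 - 2 * b * μ - c = (μ - (b - √(b ^ 2 + c))) * (μ - (b + √(b ^ 2 + c))) := by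
  linear_combination Real.sq_sqrt hc

theorem sub_sqrt_sq_add_neg (b c : ℝ) (hc : 0 < c) : b - √(b ^ 2 + c) < 0 :=
  sub_neg.mpr <| Real.lt_sqrt_of_sq_lt (by linarith)

theorem det_dAmat_sub_smul (x₁ x₂ t μ : ℝ) :
    (dAmat x₁ x₂ t - μ • 1).det =
      -μ * (μ ^ 2 - 2 * ((x₁ ^ 2 + x₂ ^ 2) * t) * μ - (x₁ ^ 2 + x₂ ^ 2)) := by
  simp only [dAmat, det_fin_three, Matrix.sub_apply, Matrix.smul_apply, one_apply, of_apply,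
    cons_val', cons_val_zero, cons_val_one, cons_val, cons_val_fin_one, smul_eq_mul, Fin.reduceEq,
    if_true, if_false]
  ring

/-- The eigenvalues of `∂ₜA(x',t)` are `0`, `|x'|²t ± √(|x'|⁴t² + |x'|²)`; in particular
for `x' ≠ 0` there is a strictly negative eigenvalue and the monotonicity condition
`∂ₜA(x',t) ≥ cI` fails for every `c > 0`. -/
theorem stmt3 (x₁ x₂ t : ℝ) :
    let n2 : ℝ := x₁^2 + x₂^2
    let lam2 : ℝ := n2 * t - Real.sqrt (n2^2 * t^2 + n2)
    let lam3 : ℝ := n2 * t + Real.sqrt (n2^2 * t^2 + n2)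
    (∀ μ ∈ ({0, lam2, lam3} : Set ℝ),
        ∃ v : Fin 3 → ℝ, v ≠ 0 ∧ (dAmat x₁ x₂ t).mulVec v = μ • v) ∧
    (∀ μ : ℝ, ∀ v : Fin 3 → ℝ, v ≠ 0 → (dAmat x₁ x₂ t).mulVec v = μ • v →
        μ ∈ ({0, lam2, lam3} : Set ℝ)) ∧
    ((x₁, x₂) ≠ (0, 0) →
      lam2 < 0 ∧
      ∀ c : ℝ, 0 < c →
        ¬ (∀ ζ : Fin 3 → ℝ, c * (ζ ⬝ᵥ ζ) ≤ ζ ⬝ᵥ (dAmat x₁ x₂ t).mulVec ζ)) := by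
  intro n2 lam2 lam3
  have hdisc : 0 ≤ (n2 * t) ^ 2 + n2 := by positivity
  have eigen_iff (μ : ℝ) :
      (∃ v ≠ 0, dAmat x₁ x₂ t *ᵥ v = μ • v) ↔ μ ∈ ({0, lam2, lam3} : Set ℝ) := by
    rw [exists_mulVec_eq_smul_iff_det_sub_eq_zero, det_dAmat_sub_smul,
      sq_sub_two_mul_sub_eq_mul _ _ _ hdisc, mul_pow]
    simp only [neg_mul, neg_eq_zero, mul_eq_zero, sub_eq_zero, Set.mem_insert_iff,
      Set.mem_singleton_iff, n2, lam2, lam3]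
  refine ⟨fun μ hμ ↦ (eigen_iff μ).mpr hμ, fun μ v hv hMv ↦ (eigen_iff μ).mp ⟨v, hv, hMv⟩,
    fun hx ↦ ?_⟩
  have hn2 : 0 < n2 := by
    obtain h | h : x₁ ≠ 0 ∨ x₂ ≠ 0 := by
      contrapose! hx
      simp [hx]
    all_goals positivity
  have hlam2 : lam2 < 0 := by
    simpa [lam2, mul_pow] using sub_sqrt_sq_add_neg (n2 * t) n2 hn2
  obtain ⟨v, hv, hMv⟩ := (eigen_iff lam2).mpr (by simp)
  exact ⟨hlam2, fun c hc ↦ not_forall_le_dotProduct_mulVec_of_mulVec_eq_smul hv hMv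
    (hlam2.trans hc)⟩
end

section
/- Let ω ⊂ ℝ² be bounded with δ = sup_{x'∈ω}|x'| < ∞, let a ∈ ℝ, and for ξ ∈ ℝ define the bilinear form 𝒜_ξ on ℋ = H₀¹(ω) × H₀¹(ω) by 𝒜_ξ[(v,w),(φ,ψ)] = ∫_ω Ã_a∇v·∇φ − 2aξ∫_ω x'^⊥·∇w φ + ξ²∫_ω vφ + ∫_ω Ã_a∇w·∇ψ + 2aξ∫_ω x'^⊥·∇v ψ + ξ²∫_ω wψ, where x'^⊥ = (−x₂,x₁). Then 𝒜_ξ[(v,w),(v,w)] ≥ (1 − a²δ²)·(‖∇v‖²_{L²(ω)} + ‖∇w‖²_{L²(ω)}) for all (v,w) ∈ ℋ. -/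
open MeasureTheory

noncomputable section

abbrev E2 := EuclideanSpace ℝ (Fin 2)

/-- `j`-th partial derivative of a function on `ℝ²`. -/
def pder (f : E2 → ℝ) (j : Fin 2) (x : E2) : ℝ :=
  fderiv ℝ f x (EuclideanSpace.single j 1)

/-- Coercivity of the bilinear form `𝒜_ξ` on `ℋ = H₀¹(ω) × H₀¹(ω)`:
`𝒜_ξ[(v,w),(v,w)] ≥ (1 − a²δ²)(‖∇v‖²_{L²(ω)} + ‖∇w‖²_{L²(ω)})`.
(Elements of `H₀¹(ω)` are represented by smooth functions compactly supported in `ω`.) -/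
theorem stmt7 (ω : Set E2) (hω : Bornology.IsBounded ω) (hωopen : IsOpen ω)
    (δ : ℝ) (hδ : ∀ x ∈ ω, ‖x‖ ≤ δ) (a ξ : ℝ)
    (v w : E2 → ℝ)
    (hv : ContDiff ℝ (⊤ : ℕ∞) v) (hw : ContDiff ℝ (⊤ : ℕ∞) w)
    (hvsupp : HasCompactSupport v) (hwsupp : HasCompactSupport w)
    (hvω : tsupport v ⊆ ω) (hwω : tsupport w ⊆ ω) :
    (1 - a^2 * δ^2) *
        ((∫ x in ω, ((pder v 0 x)^2 + (pder v 1 x)^2)) +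
         (∫ x in ω, ((pder w 0 x)^2 + (pder w 1 x)^2)))
      ≤
      (∫ x in ω,
          ((1 + a^2 * (x 1)^2) * (pder v 0 x)^2
            - 2 * a^2 * (x 0) * (x 1) * (pder v 0 x) * (pder v 1 x)
            + (1 + a^2 * (x 0)^2) * (pder v 1 x)^2))
        - 2 * a * ξ * (∫ x in ω, (-(x 1) * pder w 0 x + (x 0) * pder w 1 x) * v x)
        + ξ^2 * (∫ x in ω, (v x)^2)
        + (∫ x in ω,
            ((1 + a^2 * (x 1)^2) * (pder w 0 x)^2
              - 2 * a^2 * (x 0) * (x 1) * (pder w 0 x) * (pder w 1 x)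
              + (1 + a^2 * (x 0)^2) * (pder w 1 x)^2))
        + 2 * a * ξ * (∫ x in ω, (-(x 1) * pder v 0 x + (x 0) * pder v 1 x) * w x)
        + ξ^2 * (∫ x in ω, (w x)^2) := by
  classical
  set K : Set E2 := tsupport v ∪ tsupport w with hKdef
  have hKc : IsCompact K := hvsupp.union hwsupp
  have hKcl : IsClosed K := (isClosed_tsupport v).union (isClosed_tsupport w)
  -- vanishing outside K
  have hv0 : ∀ x ∉ K, v x = 0 := fun x hx =>
    image_eq_zero_of_notMem_tsupport (fun h => hx (Or.inl h))
  have hw0 : ∀ x ∉ K, w x = 0 := fun x hx =>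
    image_eq_zero_of_notMem_tsupport (fun h => hx (Or.inr h))
  have hpv0 : ∀ (j : Fin 2), ∀ x ∉ K, pder v j x = 0 := by
    intro j x hx
    have : fderiv ℝ v x = 0 := by
      by_contra h
      exact hx (Or.inl (support_fderiv_subset ℝ (h : fderiv ℝ v x ≠ 0)))
    simp [pder, this]
  have hpw0 : ∀ (j : Fin 2), ∀ x ∉ K, pder w j x = 0 := by
    intro j x hx
    have : fderiv ℝ w x = 0 := by
      by_contra h
      exact hx (Or.inr (support_fderiv_subset ℝ (h : fderiv ℝ w x ≠ 0)))
    simp [pder, this]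
  -- continuity of partial derivatives
  have hcv : ∀ (j : Fin 2), Continuous (pder v j) := fun j =>
    (hv.continuous_fderiv (by simp)).clm_apply continuous_const
  have hcw : ∀ (j : Fin 2), Continuous (pder w j) := fun j =>
    (hw.continuous_fderiv (by simp)).clm_apply continuous_const
  have hcv0 := hcv 0; have hcv1 := hcv 1; have hcw0 := hcw 0; have hcw1 := hcw 1
  have hvc := hv.continuous; have hwc := hw.continuous
  -- integrability helper
  have key : ∀ f : E2 → ℝ, Continuous f → (∀ x ∉ K, f x = 0) →
      IntegrableOn f ω volume := by
    intro f hf h0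
    have hcs : HasCompactSupport f := by
      refine IsCompact.of_isClosed_subset hKc (isClosed_tsupport f) ?_
      refine closure_minimal (fun x hx => ?_) hKcl
      by_contra hxK
      exact hx (h0 x hxK)
    exact (hf.integrable_of_hasCompactSupport hcs).integrableOn
  have hi1 : IntegrableOn (fun x : E2 =>
      (1 + a^2 * (x 1)^2) * (pder v 0 x)^2
        - 2 * a^2 * (x 0) * (x 1) * (pder v 0 x) * (pder v 1 x)
        + (1 + a^2 * (x 0)^2) * (pder v 1 x)^2) ω volume := by
    refine key _ (by fun_prop) (fun x hx => ?_)
    rw [hpv0 0 x hx, hpv0 1 x hx]; ring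
  have hi2 : IntegrableOn (fun x : E2 =>
      2 * a * ξ * ((-(x 1) * pder w 0 x + (x 0) * pder w 1 x) * v x)) ω volume := by
    refine key _ (by fun_prop) (fun x hx => ?_)
    rw [hv0 x hx]; ring
  have hi3 : IntegrableOn (fun x : E2 => ξ^2 * (v x)^2) ω volume := by
    refine key _ (by fun_prop) (fun x hx => ?_)
    rw [hv0 x hx]; ring
  have hi4 : IntegrableOn (fun x : E2 =>
      (1 + a^2 * (x 1)^2) * (pder w 0 x)^2
        - 2 * a^2 * (x 0) * (x 1) * (pder w 0 x) * (pder w 1 x)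
        + (1 + a^2 * (x 0)^2) * (pder w 1 x)^2) ω volume := by
    refine key _ (by fun_prop) (fun x hx => ?_)
    rw [hpw0 0 x hx, hpw0 1 x hx]; ring
  have hi5 : IntegrableOn (fun x : E2 =>
      2 * a * ξ * ((-(x 1) * pder v 0 x + (x 0) * pder v 1 x) * w x)) ω volume := by
    refine key _ (by fun_prop) (fun x hx => ?_)
    rw [hw0 x hx]; ring
  have hi6 : IntegrableOn (fun x : E2 => ξ^2 * (w x)^2) ω volume := by
    refine key _ (by fun_prop) (fun x hx => ?_)
    rw [hw0 x hx]; ring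
  have hiA : IntegrableOn (fun x : E2 => (pder v 0 x)^2 + (pder v 1 x)^2) ω volume := by
    refine key _ (by fun_prop) (fun x hx => ?_)
    rw [hpv0 0 x hx, hpv0 1 x hx]; ring
  have hiB : IntegrableOn (fun x : E2 => (pder w 0 x)^2 + (pder w 1 x)^2) ω volume := by
    refine key _ (by fun_prop) (fun x hx => ?_)
    rw [hpw0 0 x hx, hpw0 1 x hx]; ring
  -- pointwise functions
  set f1 : E2 → ℝ := fun x =>
      (1 + a^2 * (x 1)^2) * (pder v 0 x)^2
        - 2 * a^2 * (x 0) * (x 1) * (pder v 0 x) * (pder v 1 x)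
        + (1 + a^2 * (x 0)^2) * (pder v 1 x)^2 with hf1
  set f2 : E2 → ℝ := fun x =>
      2 * a * ξ * ((-(x 1) * pder w 0 x + (x 0) * pder w 1 x) * v x) with hf2
  set f3 : E2 → ℝ := fun x => ξ^2 * (v x)^2 with hf3
  set f4 : E2 → ℝ := fun x =>
      (1 + a^2 * (x 1)^2) * (pder w 0 x)^2
        - 2 * a^2 * (x 0) * (x 1) * (pder w 0 x) * (pder w 1 x)
        + (1 + a^2 * (x 0)^2) * (pder w 1 x)^2 with hf4
  set f5 : E2 → ℝ := fun x =>
      2 * a * ξ * ((-(x 1) * pder v 0 x + (x 0) * pder v 1 x) * w x) with hf5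
  set f6 : E2 → ℝ := fun x => ξ^2 * (w x)^2 with hf6
  -- constants out
  have c2 : (∫ x in ω, f2 x)
      = 2 * a * ξ * (∫ x in ω, (-(x 1) * pder w 0 x + (x 0) * pder w 1 x) * v x) :=
    integral_const_mul _ _
  have c3 : (∫ x in ω, f3 x) = ξ^2 * (∫ x in ω, (v x)^2) := integral_const_mul _ _
  have c5 : (∫ x in ω, f5 x)
      = 2 * a * ξ * (∫ x in ω, (-(x 1) * pder v 0 x + (x 0) * pder v 1 x) * w x) :=
    integral_const_mul _ _
  have c6 : (∫ x in ω, f6 x) = ξ^2 * (∫ x in ω, (w x)^2) := integral_const_mul _ _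
  -- combine integrals step by step
  have hg2 : IntegrableOn (fun x => f1 x - f2 x) ω volume := hi1.sub hi2
  have hg3 : IntegrableOn (fun x => f1 x - f2 x + f3 x) ω volume := hg2.add hi3
  have hg4 : IntegrableOn (fun x => f1 x - f2 x + f3 x + f4 x) ω volume := hg3.add hi4
  have hg5 : IntegrableOn (fun x => f1 x - f2 x + f3 x + f4 x + f5 x) ω volume := hg4.add hi5
  have e2 : (∫ x in ω, (f1 x - f2 x)) = (∫ x in ω, f1 x) - ∫ x in ω, f2 x :=
    integral_sub hi1 hi2
  have e3 : (∫ x in ω, (f1 x - f2 x + f3 x))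
      = (∫ x in ω, (f1 x - f2 x)) + ∫ x in ω, f3 x := integral_add hg2 hi3
  have e4 : (∫ x in ω, (f1 x - f2 x + f3 x + f4 x))
      = (∫ x in ω, (f1 x - f2 x + f3 x)) + ∫ x in ω, f4 x := integral_add hg3 hi4
  have e5 : (∫ x in ω, (f1 x - f2 x + f3 x + f4 x + f5 x))
      = (∫ x in ω, (f1 x - f2 x + f3 x + f4 x)) + ∫ x in ω, f5 x := integral_add hg4 hi5
  have e6 : (∫ x in ω, (f1 x - f2 x + f3 x + f4 x + f5 x + f6 x))
      = (∫ x in ω, (f1 x - f2 x + f3 x + f4 x + f5 x)) + ∫ x in ω, f6 x :=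
    integral_add hg5 hi6
  -- pointwise lower bound and monotonicity
  have hmono : (∫ x in ω, ((pder v 0 x)^2 + (pder v 1 x)^2 +
        ((pder w 0 x)^2 + (pder w 1 x)^2)))
      ≤ ∫ x in ω, (f1 x - f2 x + f3 x + f4 x + f5 x + f6 x) := by
    refine integral_mono (hiA.add hiB) (hg5.add hi6) (fun x => ?_)
    have h1 := sq_nonneg (a * (-(x 1) * pder w 0 x + (x 0) * pder w 1 x) - ξ * v x)
    have h2 := sq_nonneg (a * (-(x 1) * pder v 0 x + (x 0) * pder v 1 x) + ξ * w x)
    simp only [hf1, hf2, hf3, hf4, hf5, hf6]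
    nlinarith [h1, h2]
  have hsplit : (∫ x in ω, ((pder v 0 x)^2 + (pder v 1 x)^2 +
        ((pder w 0 x)^2 + (pder w 1 x)^2)))
      = (∫ x in ω, ((pder v 0 x)^2 + (pder v 1 x)^2)) +
        (∫ x in ω, ((pder w 0 x)^2 + (pder w 1 x)^2)) := integral_add hiA hiB
  have hSnn : 0 ≤ (∫ x in ω, ((pder v 0 x)^2 + (pder v 1 x)^2)) +
      (∫ x in ω, ((pder w 0 x)^2 + (pder w 1 x)^2)) := by
    have h1 : 0 ≤ ∫ x in ω, ((pder v 0 x)^2 + (pder v 1 x)^2) :=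
      integral_nonneg fun x => by positivity
    have h2 : 0 ≤ ∫ x in ω, ((pder w 0 x)^2 + (pder w 1 x)^2) :=
      integral_nonneg fun x => by positivity
    linarith
  have hfac : (1 - a^2 * δ^2) ≤ 1 := by nlinarith [sq_nonneg (a * δ)]
  have hkey := mul_le_of_le_one_left hSnn hfac
  linarith [hmono, hsplit, e2, e3, e4, e5, e6, c2, c3, c5, c6, hkey]

end
end
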